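/- arXiv:2306.12125 — 4 statements merged into one kernel-verified Lean document; each statement's English description precedes it below -/
import Mathlib

section
/- Let p, q, n ≥ 1, ν > 0, let Σ ∈ ℝ^{p×p} be symmetric positive definite, and let x_1,…,x_n ∈ ℝ^q and y_1,…,y_n ∈ ℝ^p be given. Define ℓ : ℝ^{p×q} → ℝ by ℓ(C) = Σ_{i=1}^n log(1 + (y_i − C x_i)ᵀ Σ^{-1} (y_i − C x_i)/ν), which (up to additive and positive multiplicative constants) is the negative log-likelihood in B of the tensor response regression model with known scatter Σ and degrees of freedom ν. Suppose B̂ ∈ ℝ^{p×q} is a local minimum of ℓ, define the weights w_i = (ν+p)/(ν + (y_i − B̂ x_i)ᵀ Σ^{-1} (y_i − B̂ x_i)) for i = 1,…,n, and suppose Σ_{i=1}^n w_i x_i x_iᵀ is invertible. Then B̂ = (Σ_{i=1}^n w_i y_i x_iᵀ)(Σ_{i=1}^n w_i x_i x_iᵀ)^{-1}; that is, the maximum likelihood estimator is the weighted least squares estimator B̂ = 𝕐 W 𝕏ᵀ(𝕏 W 𝕏ᵀ)^{-1} with W = diag(w_1,…,w_n). (Proposition 4 of the paper, in vectorized form.)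 -/
/-!
Along every line `t ↦ B̂ + t • H` the objective has derivative
`-2 ∑ᵢ (H xᵢ)ᵀ Σ⁻¹ rᵢ / (ν + rᵢᵀ Σ⁻¹ rᵢ)` at `t = 0`, where `rᵢ = yᵢ − B̂ xᵢ`, and this vanishes at a
local minimum. Taking `H` to run over the matrix units gives `Σ⁻¹ ∑ᵢ (ν + rᵢᵀ Σ⁻¹ rᵢ)⁻¹ rᵢ xᵢᵀ = 0`;
cancelling `Σ⁻¹` and multiplying by `ν + p` yields the normal equations `∑ᵢ wᵢ rᵢ xᵢᵀ = 0`, i.e.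
`∑ᵢ wᵢ yᵢ xᵢᵀ = B̂ ∑ᵢ wᵢ xᵢ xᵢᵀ`.
-/

open Matrix Real

namespace Matrix

variable {ι m k R : Type*}

theorem IsSymm.dotProduct_mulVec_comm [CommSemiring R] [Fintype m] {A : Matrix m m R}
    (hA : A.IsSymm) (u v : m → R) : u ⬝ᵥ A *ᵥ v = v ⬝ᵥ A *ᵥ u := by
  rw [dotProduct_mulVec, ← mulVec_transpose, hA.eq, dotProduct_comm]

theorem sum_vecMulVec_eq_zero_of_forall_sum_mulVec_dotProduct_eq_zero [CommSemiring R]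
    [Fintype ι] [Fintype m] [Fintype k] [DecidableEq m] [DecidableEq k]
    (u : ι → m → R) (x : ι → k → R) (h : ∀ H : Matrix m k R, ∑ i, H *ᵥ x i ⬝ᵥ u i = 0) :
    ∑ i, vecMulVec (u i) (x i) = 0 := by
  ext a b
  have hab := h (single a b 1)
  simp_rw [single_mulVec, ← Pi.single.eq_def, single_dotProduct, one_mul] at hab
  rw [Matrix.sum_apply]
  simpa [vecMulVec_apply, mul_comm] using hab

theorem sum_smul_vecMulVec_sub_mulVec [CommRing R] [Fintype ι] [Fintype k]
    (w : ι → R) (y : ι → m → R) (x : ι → k → R) (B : Matrix m k R) :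
    ∑ i, w i • vecMulVec (y i - B *ᵥ x i) (x i) =
      ∑ i, w i • vecMulVec (y i) (x i) - B * ∑ i, w i • vecMulVec (x i) (x i) := by
  rw [Matrix.mul_sum, ← Finset.sum_sub_distrib]
  refine Finset.sum_congr rfl fun i _ => ?_
  rw [Matrix.mul_smul, mul_vecMulVec, sub_vecMulVec, smul_sub]

theorem hasLineDerivAt_dotProduct_mulVec [Fintype m] [DecidableEq m] (A : Matrix m m ℝ)
    (r h : m → ℝ) :
    HasLineDerivAt ℝ (fun v => v ⬝ᵥ A *ᵥ v) (r ⬝ᵥ A *ᵥ h + h ⬝ᵥ A *ᵥ r) r h := by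
  have := (A.toQuadraticForm').hasLineDerivAt r h
  rw [toQuadraticForm', LinearMap.BilinMap.polar_toQuadraticMap] at this
  convert this using 1
  · ext v; simp [toLinearMap₂'_apply']
  · simp [toLinearMap₂'_apply']

theorem hasLineDerivAt_residual_dotProduct_mulVec [Fintype m] [Fintype k] [DecidableEq m]
    {A : Matrix m m ℝ} (hA : A.IsSymm) (x : k → ℝ) (y : m → ℝ) (B H : Matrix m k ℝ) :
    HasLineDerivAt ℝ (fun C : Matrix m k ℝ => (y - C *ᵥ x) ⬝ᵥ A *ᵥ (y - C *ᵥ x))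
      (-2 * (H *ᵥ x ⬝ᵥ A *ᵥ (y - B *ᵥ x))) B H := by
  have hline (t : ℝ) : y - (B + t • H) *ᵥ x = (y - B *ᵥ x) + t • -(H *ᵥ x) := by
    rw [add_mulVec, smul_mulVec, smul_neg]; abel
  have hquad := hasLineDerivAt_dotProduct_mulVec A (y - B *ᵥ x) (-(H *ᵥ x))
  unfold HasLineDerivAt at hquad ⊢
  simp only [hline]
  convert hquad using 1
  rw [hA.dotProduct_mulVec_comm (y - B *ᵥ x), neg_dotProduct]
  ring

theorem hasLineDerivAt_log_one_add_residual_div [Fintype m] [Fintype k] [DecidableEq m]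
    {A : Matrix m m ℝ} (hA : A.IsSymm) {ν : ℝ} (hν : ν ≠ 0) (x : k → ℝ) (y : m → ℝ)
    (B H : Matrix m k ℝ) (hpos : ν + (y - B *ᵥ x) ⬝ᵥ A *ᵥ (y - B *ᵥ x) ≠ 0) :
    HasLineDerivAt ℝ (fun C : Matrix m k ℝ => log (1 + (y - C *ᵥ x) ⬝ᵥ A *ᵥ (y - C *ᵥ x) / ν))
      (-2 * (H *ᵥ x ⬝ᵥ A *ᵥ (y - B *ᵥ x)) / (ν + (y - B *ᵥ x) ⬝ᵥ A *ᵥ (y - B *ᵥ x))) B H := by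
  have hq := ((hasLineDerivAt_residual_dotProduct_mulVec hA x y B H).div_const ν).const_add 1
  have hne : 1 + (y - B *ᵥ x) ⬝ᵥ A *ᵥ (y - B *ᵥ x) / ν ≠ 0 := by
    rwa [one_add_div hν, div_ne_zero_iff, and_iff_left hν]
  refine (hq.log (by simpa using hne)).congr_deriv ?_
  simp only [zero_smul, add_zero]
  field_simp

theorem sum_dotProduct_mulVec_div_eq_zero_of_isLocalMin [Fintype ι] [Fintype m] [Fintype k]
    [DecidableEq m] {A : Matrix m m ℝ} (hA : A.PosSemidef) {ν : ℝ} (hν : 0 < ν)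
    (x : ι → k → ℝ) (y : ι → m → ℝ) {B : Matrix m k ℝ}
    (hmin : IsLocalMin (fun C : Matrix m k ℝ =>
      ∑ i, log (1 + (y i - C *ᵥ x i) ⬝ᵥ A *ᵥ (y i - C *ᵥ x i) / ν)) B)
    (H : Matrix m k ℝ) :
    ∑ i, H *ᵥ x i ⬝ᵥ A *ᵥ (y i - B *ᵥ x i) / (ν + (y i - B *ᵥ x i) ⬝ᵥ A *ᵥ (y i - B *ᵥ x i))
      = 0 := by
  have hsymm : A.IsSymm := isHermitian_iff_isSymm.mp hA.isHermitian
  have hnonneg (v : m → ℝ) : 0 ≤ v ⬝ᵥ A *ᵥ v := by simpa using hA.dotProduct_mulVec_nonneg v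
  have hderiv : HasLineDerivAt ℝ (fun C : Matrix m k ℝ =>
      ∑ i, log (1 + (y i - C *ᵥ x i) ⬝ᵥ A *ᵥ (y i - C *ᵥ x i) / ν))
      (∑ i, -2 * (H *ᵥ x i ⬝ᵥ A *ᵥ (y i - B *ᵥ x i)) /
        (ν + (y i - B *ᵥ x i) ⬝ᵥ A *ᵥ (y i - B *ᵥ x i))) B H :=
    HasDerivAt.fun_sum fun i _ => hasLineDerivAt_log_one_add_residual_div hsymm hν.ne' (x i) (y i)
      B H (add_pos_of_pos_of_nonneg hν (hnonneg _)).ne'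
  have hzero := hmin.hasLineDerivAt_eq_zero hderiv
  simp_rw [mul_div_assoc, ← Finset.mul_sum] at hzero
  simpa using hzero

theorem sum_inv_smul_vecMulVec_residual_eq_zero_of_isLocalMin [Fintype ι] [Fintype m]
    [Fintype k] [DecidableEq m] [DecidableEq k] {A : Matrix m m ℝ} (hA : A.PosDef) {ν : ℝ}
    (hν : 0 < ν) (x : ι → k → ℝ) (y : ι → m → ℝ) {B : Matrix m k ℝ}
    (hmin : IsLocalMin (fun C : Matrix m k ℝ =>
      ∑ i, log (1 + (y i - C *ᵥ x i) ⬝ᵥ A *ᵥ (y i - C *ᵥ x i) / ν)) B) :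
    ∑ i, (ν + (y i - B *ᵥ x i) ⬝ᵥ A *ᵥ (y i - B *ᵥ x i))⁻¹ • vecMulVec (y i - B *ᵥ x i) (x i)
      = 0 := by
  have hscore := sum_dotProduct_mulVec_div_eq_zero_of_isLocalMin hA.posSemidef hν x y hmin
  have hdet : IsUnit A.det := (isUnit_iff_isUnit_det A).mp hA.isUnit
  have hA_mul : A * ∑ i, (ν + (y i - B *ᵥ x i) ⬝ᵥ A *ᵥ (y i - B *ᵥ x i))⁻¹ •
      vecMulVec (y i - B *ᵥ x i) (x i) = 0 := by
    simp_rw [Matrix.mul_sum, Matrix.mul_smul, mul_vecMulVec, ← smul_vecMulVec]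
    refine sum_vecMulVec_eq_zero_of_forall_sum_mulVec_dotProduct_eq_zero _ _ fun H => ?_
    simp_rw [dotProduct_smul, smul_eq_mul, ← div_eq_inv_mul]
    exact hscore H
  simpa [← Matrix.mul_assoc, nonsing_inv_mul A hdet] using congrArg (A⁻¹ * ·) hA_mul

end Matrix

theorem stmt3_general (p q n : ℕ)
    (ν : ℝ) (hν : 0 < ν)
    (S : Matrix (Fin p) (Fin p) ℝ) (hS : S.PosDef)
    (x : Fin n → Fin q → ℝ) (y : Fin n → Fin p → ℝ)
    (Bhat : Matrix (Fin p) (Fin q) ℝ)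
    (hmin : IsLocalMin
      (fun C : Matrix (Fin p) (Fin q) ℝ =>
        ∑ i, Real.log (1 + (y i - C.mulVec (x i)) ⬝ᵥ (S⁻¹).mulVec (y i - C.mulVec (x i)) / ν))
      Bhat)
    (w : Fin n → ℝ)
    (hw : ∀ i, w i = (ν + p) /
      (ν + (y i - Bhat.mulVec (x i)) ⬝ᵥ (S⁻¹).mulVec (y i - Bhat.mulVec (x i))))
    (hinv : IsUnit (∑ i, w i • Matrix.vecMulVec (x i) (x i))) :
    Bhat = (∑ i, w i • Matrix.vecMulVec (y i) (x i)) *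
      (∑ i, w i • Matrix.vecMulVec (x i) (x i))⁻¹ := by
  have hnormal := sum_inv_smul_vecMulVec_residual_eq_zero_of_isLocalMin hS.inv hν x y hmin
  have hweighted : ∑ i, w i • vecMulVec (y i - Bhat *ᵥ x i) (x i) = 0 := by
    simp_rw [hw, div_eq_mul_inv, mul_smul, ← Finset.smul_sum, hnormal, smul_zero]
  rw [sum_smul_vecMulVec_sub_mulVec, sub_eq_zero] at hweighted
  rw [hweighted, mul_nonsing_inv_cancel_right _ _ ((isUnit_iff_isUnit_det _).mp hinv)]

/-- Proposition 4, vectorized: a local minimum `B̂` of the (rescaled)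
negative t log-likelihood `ℓ(C) = Σ_i log(1 + (y_i − C x_i)ᵀ Σ^{-1} (y_i − C x_i)/ν)`
satisfies the weighted least squares equation
`B̂ = (Σ_i w_i y_i x_iᵀ)(Σ_i w_i x_i x_iᵀ)^{-1}` with
`w_i = (ν+p)/(ν + (y_i − B̂x_i)ᵀΣ^{-1}(y_i − B̂x_i))`. -/
theorem stmt3 (p q n : ℕ) (hp : 1 ≤ p) (hq : 1 ≤ q) (hn : 1 ≤ n)
    (ν : ℝ) (hν : 0 < ν)
    (S : Matrix (Fin p) (Fin p) ℝ) (hS : S.PosDef)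
    (x : Fin n → Fin q → ℝ) (y : Fin n → Fin p → ℝ)
    (Bhat : Matrix (Fin p) (Fin q) ℝ)
    (hmin : IsLocalMin
      (fun C : Matrix (Fin p) (Fin q) ℝ =>
        ∑ i, Real.log (1 + (y i - C.mulVec (x i)) ⬝ᵥ (S⁻¹).mulVec (y i - C.mulVec (x i)) / ν))
      Bhat)
    (w : Fin n → ℝ)
    (hw : ∀ i, w i = (ν + p) /
      (ν + (y i - Bhat.mulVec (x i)) ⬝ᵥ (S⁻¹).mulVec (y i - Bhat.mulVec (x i))))
    (hinv : IsUnit (∑ i, w i • Matrix.vecMulVec (x i) (x i))) :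
    Bhat = (∑ i, w i • Matrix.vecMulVec (y i) (x i)) *
      (∑ i, w i • Matrix.vecMulVec (x i) (x i))⁻¹ :=
  stmt3_general p q n ν hν S hS x y Bhat hmin w hw hinv
end

section
/- Fix M ≥ 1, dimensions p_1,…,p_M ≥ 1 with p = ∏_m p_m and p_{−m} = ∏_{j≠m} p_j, q ≥ 1, n ≥ 1, ν > 0, data x_1,…,x_n ∈ ℝ^q and Y_1,…,Y_n : I → ℝ where I = ∏_m {1,…,p_m}, and an arbitrary penalty function P : T → ℝ on the space T of coefficient arrays B : I × {1,…,q} → ℝ. For B ∈ T write r_i(B) : I → ℝ, r_i(B)(u) = Y_i(u) − Σ_{k=1}^q B(u,k) x_i(k). For a tuple Ξ = (Σ_1,…,Σ_M) of symmetric positive definite matrices Σ_m ∈ ℝ^{p_m×p_m}, define the Mahalanobis distances q_i(B,Ξ) = Σ_{u,v∈I} r_i(B)(u) r_i(B)(v) ∏_{m=1}^M (Σ_m^{-1})(u_m, v_m) and D(Ξ) = Σ_{m=1}^M p_{−m} log det Σ_m. Define L_n(B,Ξ) = (n/2)D(Ξ) + ((ν+p)/2) Σ_{i=1}^n log(1 +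 q_i(B,Ξ)/ν) + P(B), and, for an anchor (B',Ξ'), define the weights ω_i' = (ν+p)/(ν + q_i(B',Ξ')) and F_n(B,Ξ | B',Ξ') = (n/2)D(Ξ) + (1/2) Σ_{i=1}^n ω_i' q_i(B,Ξ) + P(B). Then F_n majorizes L_n at the anchor up to an additive constant: for every B ∈ T and every tuple Ξ of symmetric positive definite matrices, L_n(B,Ξ) − L_n(B',Ξ') ≤ F_n(B,Ξ | B',Ξ') − F_n(B',Ξ' | B',Ξ'). (Proposition 5 of the paper: the surrogate function of the MM algorithm majorizes the penalized negative log-likelihood.) -/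
open MeasureTheory Matrix Real Filter Finset

/-- Multi-indices of an `M`-way tensor with mode dimensions `p`. -/
abbrev MultiIndex (M : ℕ) (p : Fin M → ℕ) : Type := (m : Fin M) → Fin (p m)

/-- The tensor Mahalanobis distance `‖E‖²_Ξ`, written entrywise via the
Kronecker-product precision matrix. -/
noncomputable def mahalSq {M : ℕ} {p : Fin M → ℕ}
    (Xi : (m : Fin M) → Matrix (Fin (p m)) (Fin (p m)) ℝ)
    (E : MultiIndex M p → ℝ) : ℝ :=
  ∑ u : MultiIndex M p, ∑ v : MultiIndex M p, E u * E v * ∏ m, (Xi m)⁻¹ (u m) (v m)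

/-- `D(Ξ) = S_m p_{−m} log det S_m`. -/
noncomputable def logDetTerm {M : ℕ} (p : Fin M → ℕ)
    (Xi : (m : Fin M) → Matrix (Fin (p m)) (Fin (p m)) ℝ) : ℝ :=
  ∑ m, (∏ j ∈ Finset.univ.erase m, (p j : ℝ)) * Real.log (Xi m).det

/-! Concavity of `log` gives `log x - log y ≤ (x - y) / y`. With `x = ν + q_i(B, Ξ)` and
`y = ν + q_i(B', Ξ')`, multiplying by `(ν + p) / 2` turns each log term of `L_n` into at most the
weighted quadratic term of `F_n`: the weight `ω_i'` is exactly the slope `(ν + p) / y`. The bound needs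
`ν + q_i > 0`, which holds since `q_i` is the quadratic form of the Kronecker product of the positive
semidefinite matrices `Σ_m⁻¹`. The terms `D(Ξ)` and `P(B)` are shared by `L_n` and `F_n`. -/

open scoped ComplexOrder

namespace Matrix

def piKronecker {R ι : Type*} [CommMonoid R] [Fintype ι] {κ : ι → Type*}
    (A : (i : ι) → Matrix (κ i) (κ i) R) : Matrix ((i : ι) → κ i) ((i : ι) → κ i) R :=
  of fun u v => ∏ i, A i (u i) (v i)

theorem PosSemidef.piKronecker {𝕜 ι : Type*} [RCLike 𝕜] [Fintype ι] {κ : ι → Type*}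
    [∀ i, Fintype (κ i)] {A : (i : ι) → Matrix (κ i) (κ i) 𝕜} (hA : ∀ i, (A i).PosSemidef) :
    (piKronecker A).PosSemidef := by
  classical
  choose k v hv using fun i => posSemidef_iff_eq_sum_vecMulVec.mp (hA i)
  -- writing each `A i` as a sum of rank-one matrices `v vᴴ` and expanding the product over `i`
  have h_sum_rankOne : Matrix.piKronecker A = ∑ j : (i : ι) → Fin (k i),
      vecMulVec (fun u : (i : ι) → κ i => ∏ i, v i (j i) (u i))
        (star fun u : (i : ι) → κ i => ∏ i, v i (j i) (u i)) := by
    ext u w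
    simp only [Matrix.piKronecker, of_apply, hv, sum_apply, vecMulVec_apply, Pi.star_apply,
      star_prod, ← prod_mul_distrib]
    rw [prod_univ_sum]
    simp only [Fintype.piFinset_univ, RCLike.star_def]
  rw [h_sum_rankOne]
  exact posSemidef_sum _ fun j _ => posSemidef_vecMulVec_self_star _

end Matrix

theorem mahalSq_eq_dotProduct_piKronecker {M : ℕ} {p : Fin M → ℕ}
    (Xi : (m : Fin M) → Matrix (Fin (p m)) (Fin (p m)) ℝ) (E : MultiIndex M p → ℝ) :
    mahalSq Xi E = E ⬝ᵥ (piKronecker (fun m => (Xi m)⁻¹) *ᵥ E) := by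
  simp only [mahalSq, dotProduct, mulVec, piKronecker, of_apply, mul_sum]
  refine sum_congr rfl fun u _ => sum_congr rfl fun v _ => ?_
  ring

theorem mahalSq_nonneg {M : ℕ} {p : Fin M → ℕ}
    {Xi : (m : Fin M) → Matrix (Fin (p m)) (Fin (p m)) ℝ}
    (hXi : ∀ m, ((Xi m)⁻¹).PosSemidef) (E : MultiIndex M p → ℝ) :
    0 ≤ mahalSq Xi E := by
  rw [mahalSq_eq_dotProduct_piKronecker]
  simpa only [star_trivial] using (PosSemidef.piKronecker hXi).dotProduct_mulVec_nonneg E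

theorem log_one_add_div_sub_log_one_add_div_le {ν a b : ℝ} (hν : 0 < ν) (ha : 0 < ν + a)
    (hb : 0 < ν + b) : log (1 + a / ν) - log (1 + b / ν) ≤ (a - b) / (ν + b) := by
  have one_add_div (c : ℝ) : 1 + c / ν = (ν + c) / ν := by field_simp
  rw [one_add_div, one_add_div, ← log_div (div_pos ha hν).ne' (div_pos hb hν).ne',
    div_div_div_cancel_right₀ hν.ne']
  calc log ((ν + a) / (ν + b)) ≤ (ν + a) / (ν + b) - 1 := log_le_sub_one_of_pos (div_pos ha hb)
    _ = (a - b) / (ν + b) := by field_simp; ring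

theorem stmt4_general (M : ℕ) (p : Fin M → ℕ)
    (q n : ℕ) (ν : ℝ) (hν : 0 < ν)
    (P : (MultiIndex M p → Fin q → ℝ) → ℝ)
    (r : (MultiIndex M p → Fin q → ℝ) → Fin n → MultiIndex M p → ℝ)
    -- the anchor (B', Ξ')
    (B' : MultiIndex M p → Fin q → ℝ)
    (Xi' : (m : Fin M) → Matrix (Fin (p m)) (Fin (p m)) ℝ)
    (hXi' : ∀ m, (Xi' m).PosDef)
    -- the anchor weights ω_i'
    (w : Fin n → ℝ)
    (hw : ∀ i, w i = (ν + ∏ m, (p m : ℝ)) / (ν + mahalSq Xi' (r B' i)))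
    -- L_n and F_n
    (L F : (MultiIndex M p → Fin q → ℝ) →
      ((m : Fin M) → Matrix (Fin (p m)) (Fin (p m)) ℝ) → ℝ)
    (hL : ∀ B Xi, L B Xi = (n / 2 : ℝ) * logDetTerm p Xi +
      (ν + ∏ m, (p m : ℝ)) / 2 * ∑ i, Real.log (1 + mahalSq Xi (r B i) / ν) + P B)
    (hF : ∀ B Xi, F B Xi = (n / 2 : ℝ) * logDetTerm p Xi +
      (1 / 2 : ℝ) * ∑ i, w i * mahalSq Xi (r B i) + P B) :
    ∀ (B : MultiIndex M p → Fin q → ℝ)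
      (Xi : (m : Fin M) → Matrix (Fin (p m)) (Fin (p m)) ℝ),
      (∀ m, (Xi m).PosDef) →
      L B Xi - L B' Xi' ≤ F B Xi - F B' Xi' := by
  intro B Xi hXi
  have hpos {S : (m : Fin M) → Matrix (Fin (p m)) (Fin (p m)) ℝ} (hS : ∀ m, (S m).PosDef)
      (E : MultiIndex M p → ℝ) : 0 < ν + mahalSq S E := by
    linarith [mahalSq_nonneg (fun m => (hS m).posSemidef.inv) E]
  have hc : 0 ≤ (ν + ∏ m, (p m : ℝ)) / 2 := by positivity
  have term (i : Fin n) :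
      (ν + ∏ m, (p m : ℝ)) / 2 * (log (1 + mahalSq Xi (r B i) / ν)
        - log (1 + mahalSq Xi' (r B' i) / ν))
      ≤ 1 / 2 * (w i * mahalSq Xi (r B i)) - 1 / 2 * (w i * mahalSq Xi' (r B' i)) :=
    calc _ ≤ (ν + ∏ m, (p m : ℝ)) / 2 *
          ((mahalSq Xi (r B i) - mahalSq Xi' (r B' i)) / (ν + mahalSq Xi' (r B' i))) :=
        mul_le_mul_of_nonneg_left (log_one_add_div_sub_log_one_add_div_le hν
          (hpos hXi _) (hpos hXi' _)) hc
      _ = _ := by rw [hw i]; ring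
  have hsum := Finset.sum_le_sum fun i (_ : i ∈ univ) => term i
  simp only [← mul_sum, sum_sub_distrib] at hsum
  rw [hL, hL, hF, hF]
  linarith

/-- Proposition 5: the weighted-least-squares surrogate `F_n`
majorizes the penalized negative log-likelihood `L_n` at the anchor, up to an
additive constant: `L_n(B,Ξ) − L_n(B',Ξ') ≤ F_n(B,Ξ|B',Ξ') − F_n(B',Ξ'|B',Ξ')`. -/
theorem stmt4 (M : ℕ) (hM : 1 ≤ M) (p : Fin M → ℕ) (hp : ∀ m, 1 ≤ p m)
    (q n : ℕ) (hq : 1 ≤ q) (hn : 1 ≤ n) (ν : ℝ) (hν : 0 < ν)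
    (x : Fin n → Fin q → ℝ) (Y : Fin n → MultiIndex M p → ℝ)
    (P : (MultiIndex M p → Fin q → ℝ) → ℝ)
    (r : (MultiIndex M p → Fin q → ℝ) → Fin n → MultiIndex M p → ℝ)
    (hr : ∀ B i u, r B i u = Y i u - ∑ k, B u k * x i k)
    -- the anchor (B', Ξ')
    (B' : MultiIndex M p → Fin q → ℝ)
    (Xi' : (m : Fin M) → Matrix (Fin (p m)) (Fin (p m)) ℝ)
    (hXi' : ∀ m, (Xi' m).PosDef)
    -- the anchor weights ω_i'
    (w : Fin n → ℝ)
    (hw : ∀ i, w i = (ν + ∏ m, (p m : ℝ)) / (ν + mahalSq Xi' (r B' i)))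
    -- L_n and F_n
    (L F : (MultiIndex M p → Fin q → ℝ) →
      ((m : Fin M) → Matrix (Fin (p m)) (Fin (p m)) ℝ) → ℝ)
    (hL : ∀ B Xi, L B Xi = (n / 2 : ℝ) * logDetTerm p Xi +
      (ν + ∏ m, (p m : ℝ)) / 2 * ∑ i, Real.log (1 + mahalSq Xi (r B i) / ν) + P B)
    (hF : ∀ B Xi, F B Xi = (n / 2 : ℝ) * logDetTerm p Xi +
      (1 / 2 : ℝ) * ∑ i, w i * mahalSq Xi (r B i) + P B) :
    ∀ (B : MultiIndex M p → Fin q → ℝ)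
      (Xi : (m : Fin M) → Matrix (Fin (p m)) (Fin (p m)) ℝ),
      (∀ m, (Xi m).PosDef) →
      L B Xi - L B' Xi' ≤ F B Xi - F B' Xi' :=
  stmt4_general M p q n ν hν P r B' Xi' hXi' w hw L F hL hF
end

section
/- Let ν > 2, p ≥ 1, q ≥ 1, let Σ_X ∈ ℝ^{q×q} and Σ ∈ ℝ^{p×p} be symmetric positive definite, and let A be a nonempty subset of {1,…,p}×{1,…,q}. For a symmetric positive definite W ∈ ℝ^{p×p}, let M(W) be the matrix indexed by ({1,…,p}×{1,…,q})² with entries M(W)((j,k),(j',k')) = Σ_X(k,k')·W(j,j'), and let M(W)_A denote its principal submatrix on A×A (which is symmetric positive definite). Define V_T = ((ν+p+2)/(ν+p)) · (M(Σ^{-1})_A)^{-1}, V_N = (ν/(ν−2)) · (M(Σ^{-1})_A)^{-1}, and V_L = (ν/(ν−2)) · (M(I_p)_A)^{-1} M(Σ)_A (M(I_p)_A)^{-1}, where I_p is the p×p identity. Then V_L − V_N is positive semidefinite and V_N − V_T is positive definite; i.e., in the Loewner order, V_L ⪰ V_N ≻ V_T. (Theorem 1, part 5: the asymptotic covariance of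 the adaptively penalized least squares estimator dominates that of the penalized tensor-normal MLE, which strictly dominates that of the penalized tensor-t MLE.) -/
/-!
`V_N - V_T` is a positive multiple of the inverse of the positive definite matrix `M(Σ⁻¹)_A`,
because `(ν + p + 2)/(ν + p) < ν/(ν - 2)` for `ν > 2`.

For `V_L ⪰ V_N`, write every `M(W)_A` as `Pᵀ (W ⊗ Σ_X) P` with `P` the coordinate selection of
`A`. For `K = Σ ⊗ Σ_X` and `W = I ⊗ Σ_X` one has `W K⁻¹ W = Σ⁻¹ ⊗ Σ_X`, so the claim is the
weighted Gauss–Markov inequality `B⁻¹ (PᵀKP) B⁻¹ ⪰ (Pᵀ W K⁻¹ W P)⁻¹` with `B = PᵀWP`. That is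
the Schur complement of the Gram matrix of the columns of `P` and `U = K⁻¹WP` in the inner
product given by `K`, whose off-diagonal block `PᵀKU` is exactly `B`.
-/

open Matrix

/-- The matrix `M(W)` with entries `M(W)((j,k),(j',k')) = Σ_X(k,k')·W(j,j')`
(the Kronecker product `Σ_X ⊗ W` written entrywise). -/
def kronMat {p q : ℕ} (SX : Matrix (Fin q) (Fin q) ℝ)
    (W : Matrix (Fin p) (Fin p) ℝ) : Matrix (Fin p × Fin q) (Fin p × Fin q) ℝ :=
  Matrix.of fun jk jk' => SX jk.2 jk'.2 * W jk.1 jk'.1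

/-- The principal submatrix of `M(W)` on `A × A`. -/
def kronSub {p q : ℕ} (SX : Matrix (Fin q) (Fin q) ℝ)
    (W : Matrix (Fin p) (Fin p) ℝ) (A : Finset (Fin p × Fin q)) :
    Matrix A A ℝ :=
  Matrix.of fun a b => kronMat SX W (a : Fin p × Fin q) (b : Fin p × Fin q)

namespace Matrix

variable {𝕜 n m l : Type*} [Field 𝕜] [PartialOrder 𝕜] [StarRing 𝕜] [StarOrderedRing 𝕜]
  [Fintype n] [Fintype m] [Fintype l] [DecidableEq l]

theorem PosSemidef.schur_complement_conjTranspose_mul_mul {K : Matrix n n 𝕜} (hK : K.PosSemidef)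
    (P : Matrix n m 𝕜) (U : Matrix n l 𝕜) (hD : (Uᴴ * K * U).PosDef) :
    (Pᴴ * K * P - (Pᴴ * K * U) * (Uᴴ * K * U)⁻¹ * (Uᴴ * K * P)).PosSemidef := by
  have hgram := hK.conjTranspose_mul_mul_same (fromCols P U)
  have hcross : (Pᴴ * K * U)ᴴ = Uᴴ * K * P := by
    simp only [conjTranspose_mul, conjTranspose_conjTranspose, hK.isHermitian.eq, Matrix.mul_assoc]
  rw [conjTranspose_fromCols_eq_fromRows_conjTranspose, fromRows_mul, fromRows_mul_fromCols,
    ← hcross] at hgram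
  have := hD.isUnit.invertible
  rw [← hcross]
  exact (PosDef.fromBlocks₂₂ _ _ hD).mp hgram

theorem PosDef.inv_mul_conjTranspose_mul_mul_inv_sub_inv [DecidableEq n] [DecidableEq m]
    {K W : Matrix n n 𝕜} (hK : K.PosDef) (hW : W.IsHermitian) (P : Matrix n m 𝕜)
    (hB : IsUnit (Pᴴ * W * P)) :
    ((Pᴴ * W * P)⁻¹ * (Pᴴ * K * P) * (Pᴴ * W * P)⁻¹
      - (Pᴴ * (W * K⁻¹ * W) * P)⁻¹).PosSemidef := by
  set B := Pᴴ * W * P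
  set U := K⁻¹ * W * P
  have hKinv : K * K⁻¹ = 1 := mul_nonsing_inv K ((isUnit_iff_isUnit_det K).mp hK.isUnit)
  have hinvK : K⁻¹ * K = 1 := nonsing_inv_mul K ((isUnit_iff_isUnit_det K).mp hK.isUnit)
  have hPKU : Pᴴ * K * U = B := by
    simp only [U, B, Matrix.mul_assoc, ← Matrix.mul_assoc K, hKinv, Matrix.one_mul]
  have hUKP : Uᴴ * K * P = B := by
    simp only [U, B, conjTranspose_mul, conjTranspose_nonsing_inv, hK.isHermitian.eq, hW.eq,
      Matrix.mul_assoc, hinvK, Matrix.mul_one]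
  have hUKU : Uᴴ * K * U = Pᴴ * (W * K⁻¹ * W) * P := by
    simp only [U, conjTranspose_mul, conjTranspose_nonsing_inv, hK.isHermitian.eq, hW.eq,
      Matrix.mul_assoc, ← Matrix.mul_assoc K, hKinv, Matrix.one_mul]
  have hD : (Uᴴ * K * U).PosDef := by
    refine hK.conjTranspose_mul_mul_same fun x y hxy => mulVec_injective_of_isUnit hB ?_
    simp only [← hPKU, ← mulVec_mulVec, hxy]
  have hschur := hK.posSemidef.schur_complement_conjTranspose_mul_mul P U hD
  rw [hPKU, hUKP, hUKU] at hschur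
  have hBH : B⁻¹ᴴ = B⁻¹ := by
    rw [conjTranspose_nonsing_inv, (isHermitian_conjTranspose_mul_mul P hW).eq]
  have hcancel : B⁻¹ * (B * (Pᴴ * (W * K⁻¹ * W) * P)⁻¹ * B) * B⁻¹
      = (Pᴴ * (W * K⁻¹ * W) * P)⁻¹ := by
    calc _ = (B⁻¹ * B) * (Pᴴ * (W * K⁻¹ * W) * P)⁻¹ * (B * B⁻¹) := by
          simp only [Matrix.mul_assoc]
      _ = _ := by
          rw [nonsing_inv_mul B ((isUnit_iff_isUnit_det B).mp hB),
            mul_nonsing_inv B ((isUnit_iff_isUnit_det B).mp hB), Matrix.one_mul, Matrix.mul_one]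
  simpa only [hBH, Matrix.mul_sub, Matrix.sub_mul, hcancel]
    using hschur.mul_mul_conjTranspose_same B⁻¹

end Matrix

open scoped Kronecker

theorem Matrix.conjTranspose_one_submatrix_mul_mul {α n m : Type*} [Semiring α] [StarRing α]
    [Fintype n] [Fintype m] [DecidableEq n] (e : m → n) (M : Matrix n n α) :
    ((1 : Matrix n n α).submatrix id e)ᴴ * M * (1 : Matrix n n α).submatrix id e
      = M.submatrix e e := by
  rw [conjTranspose_submatrix, conjTranspose_one]
  have hleft := one_submatrix_mul e (Equiv.refl n) M
  have hright := mul_submatrix_one (Equiv.refl n) e (M.submatrix e id)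
  simp only [Equiv.coe_refl, Equiv.refl_symm, Function.id_comp] at hleft hright
  rw [hleft, hright, submatrix_submatrix]
  rfl

section

variable {p q : ℕ} (SX : Matrix (Fin q) (Fin q) ℝ)

theorem kronMat_eq_kronecker (W : Matrix (Fin p) (Fin p) ℝ) : kronMat SX W = W ⊗ₖ SX := by
  ext ⟨j, k⟩ ⟨j', k'⟩
  simp [kronMat, mul_comm]

theorem kronSub_eq_submatrix (W : Matrix (Fin p) (Fin p) ℝ) (A : Finset (Fin p × Fin q)) :
    kronSub SX W A = (kronMat SX W).submatrix (↑) (↑) :=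
  rfl

variable {SX}

theorem posDef_kronSub (hSX : SX.PosDef) {W : Matrix (Fin p) (Fin p) ℝ} (hW : W.PosDef)
    (A : Finset (Fin p × Fin q)) : (kronSub SX W A).PosDef := by
  rw [kronSub_eq_submatrix, kronMat_eq_kronecker]
  exact (hW.kronecker hSX).submatrix Subtype.val_injective

theorem kronSub_sandwich_sub_inv_posSemidef (hSX : SX.PosDef) {S : Matrix (Fin p) (Fin p) ℝ}
    (hS : S.PosDef) (A : Finset (Fin p × Fin q)) :
    ((kronSub SX 1 A)⁻¹ * kronSub SX S A * (kronSub SX 1 A)⁻¹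
      - (kronSub SX S⁻¹ A)⁻¹).PosSemidef := by
  let P : Matrix (Fin p × Fin q) A ℝ := (1 : Matrix _ _ ℝ).submatrix id Subtype.val
  have hsub (W : Matrix (Fin p) (Fin p) ℝ) : kronSub SX W A = Pᴴ * (W ⊗ₖ SX) * P := by
    rw [conjTranspose_one_submatrix_mul_mul, kronSub_eq_submatrix, kronMat_eq_kronecker]
  have hWKW :
      ((1 : Matrix (Fin p) (Fin p) ℝ) ⊗ₖ SX) * (S ⊗ₖ SX)⁻¹ * (1 ⊗ₖ SX) = S⁻¹ ⊗ₖ SX := by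
    rw [inv_kronecker, ← mul_kronecker_mul, ← mul_kronecker_mul, Matrix.one_mul, Matrix.mul_one,
      mul_nonsing_inv _ ((isUnit_iff_isUnit_det SX).mp hSX.isUnit), Matrix.one_mul]
  have hB : IsUnit (Pᴴ * ((1 : Matrix (Fin p) (Fin p) ℝ) ⊗ₖ SX) * P) := by
    rw [← hsub]
    exact (posDef_kronSub hSX .one A).isUnit
  have := (hS.kronecker hSX).inv_mul_conjTranspose_mul_mul_inv_sub_inv
    (PosDef.one.kronecker hSX).isHermitian P hB
  rwa [hWKW, ← hsub, ← hsub, ← hsub] at this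

end

theorem add_two_div_lt_div_sub_two {ν x : ℝ} (hν : 2 < ν) (hx : 0 ≤ x) :
    (ν + x + 2) / (ν + x) < ν / (ν - 2) := by
  rw [div_lt_div_iff₀ (by linarith) (by linarith)]
  nlinarith

theorem stmt5_general (p q : ℕ) (ν : ℝ) (hν : 2 < ν)
    (SX : Matrix (Fin q) (Fin q) ℝ) (hSX : SX.PosDef)
    (S : Matrix (Fin p) (Fin p) ℝ) (hS : S.PosDef)
    (A : Finset (Fin p × Fin q))
    (VT VN VL : Matrix A A ℝ)
    (hVT : VT = ((ν + p + 2) / (ν + p)) • (kronSub SX S⁻¹ A)⁻¹)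
    (hVN : VN = (ν / (ν - 2)) • (kronSub SX S⁻¹ A)⁻¹)
    (hVL : VL = (ν / (ν - 2)) •
      ((kronSub SX (1 : Matrix (Fin p) (Fin p) ℝ) A)⁻¹ * kronSub SX S A *
        (kronSub SX (1 : Matrix (Fin p) (Fin p) ℝ) A)⁻¹)) :
    (VL - VN).PosSemidef ∧ (VN - VT).PosDef := by
  subst hVT hVN hVL
  constructor
  · rw [← smul_sub]
    exact (kronSub_sandwich_sub_inv_posSemidef hSX hS A).smul (by bound)
  · rw [← sub_smul]
    exact (posDef_kronSub hSX hS.inv A).inv.smul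
      (sub_pos.mpr (add_two_div_lt_div_sub_two hν p.cast_nonneg))

/-- Theorem 1, part 5: with `V_T`, `V_N`, `V_L` the asymptotic
covariances of the APT, APN, and APL estimators, one has `V_L ⪰ V_N ≻ V_T` in the
Loewner order. -/
theorem stmt5 (p q : ℕ) (hp : 1 ≤ p) (hq : 1 ≤ q) (ν : ℝ) (hν : 2 < ν)
    (SX : Matrix (Fin q) (Fin q) ℝ) (hSX : SX.PosDef)
    (S : Matrix (Fin p) (Fin p) ℝ) (hS : S.PosDef)
    (A : Finset (Fin p × Fin q)) (hA : A.Nonempty)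
    (VT VN VL : Matrix A A ℝ)
    (hVT : VT = ((ν + p + 2) / (ν + p)) • (kronSub SX S⁻¹ A)⁻¹)
    (hVN : VN = (ν / (ν - 2)) • (kronSub SX S⁻¹ A)⁻¹)
    (hVL : VL = (ν / (ν - 2)) •
      ((kronSub SX (1 : Matrix (Fin p) (Fin p) ℝ) A)⁻¹ * kronSub SX S A *
        (kronSub SX (1 : Matrix (Fin p) (Fin p) ℝ) A)⁻¹)) :
    (VL - VN).PosSemidef ∧ (VN - VT).PosDef :=
  stmt5_general p q ν hν SX hSX S hS A VT VN VL hVT hVN hVL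
end

section
/- Fix M ≥ 1, dimensions p_1,…,p_M ≥ 1 with p_{−m} = ∏_{j≠m} p_j, n ≥ 1, positive weights ω_1,…,ω_n > 0, and arrays Y_1,…,Y_n, μ : I → ℝ where I = ∏_m {1,…,p_m}; write E_i = Y_i − μ. For a tuple Ξ = (Σ_1,…,Σ_M) of symmetric positive definite matrices Σ_m ∈ ℝ^{p_m×p_m}, define ‖E‖²_Ξ = Σ_{u,v∈I} E(u)E(v) ∏_{m=1}^M (Σ_m^{-1})(u_m,v_m) and H(Ξ) = Σ_{m=1}^M (n p_{−m}/2) log det Σ_m + (1/2)Σ_{i=1}^n ω_i ‖E_i‖²_Ξ. Suppose Ξ̃ = (Σ̃_1,…,Σ̃_M) minimizes H over the set of all tuples of symmetric positive definite matrices. Then for every m = 1,…,M and all a, b ∈ {1,…,p_m}: Σ̃_m(a,b) = (1/(n p_{−m})) Σ_{i=1}^n ω_i · [ Σ_{u,v ∈ J} E_i(u⁽ᵃ⁾) (∏_{j≠m}(Σ̃_j^{-1})(u_j, v_j)) E_i(v⁽ᵇ⁾) ], where J = ∏_{j≠m}{1,…,p_j} and u⁽ᵃ⁾ ∈ I denotes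 the multi-index with m-th coordinate a and remaining coordinates u. Equivalently, in matrix form, Σ̃_m = (1/(n p_{−m})) Σ_i ω_i (Y_i − μ)_{(m)} (⊗_{j≠m} Σ̃_j^{-1}) (Y_i − μ)_{(m)}ᵀ, i.e., the minimizer satisfies the generalized flip-flop stationary equations. (Lemma 1 of the Supplementary Materials.) -/
/-!
Fix every mode but `m0`. As a function of `Σ = Σ_{m0}`, `H` is then
`c/2 · log det Σ + 1/2 · tr(Σ⁻¹ S)` plus a constant, where `c = n p_{−m0}` and `S` is the
weighted sum of the mode-`m0` Gram matrices `E_i(m0) (⊗_{j ≠ m0} Σ̃_j⁻¹) E_i(m0)ᵀ`.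
Stretching `Σ̃_{m0}` by a factor `t > 0` along a direction `w` with `wᵀ Σ̃_{m0} w = 1`
multiplies the determinant by `t` and changes `tr(Σ⁻¹ S)` by `(1/t − 1) wᵀ S w`, so minimality
forces `c log t + (1/t − 1) wᵀ S w ≥ 0` for all `t > 0`, i.e. `wᵀ S w = c`. Thus the symmetric
matrices `S` and `c Σ̃_{m0}` have the same quadratic form, hence are equal.
-/

open Matrix Real Finset

/-- Multi-indices over all modes other than `m0`. -/
abbrev OffIndex (M : ℕ) (p : Fin M → ℕ) (m0 : Fin M) : Type :=
  (j : {j : Fin M // j ≠ m0}) → Fin (p j.1)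

/-- The full multi-index whose `m0`-th coordinate is `a` and whose remaining
coordinates are given by `i`. -/
def embIdx {M : ℕ} {p : Fin M → ℕ} (m0 : Fin M) (a : Fin (p m0))
    (i : OffIndex M p m0) : MultiIndex M p :=
  fun j => if h : j = m0 then cast (congrArg (fun k => Fin (p k)) h.symm) a else i ⟨j, h⟩

lemma eq_of_forall_mul_log_add_inv_sub_one_mul_nonneg {c s : ℝ} (hc : 0 < c)
    (h : ∀ t, 0 < t → 0 ≤ c * log t + (t⁻¹ - 1) * s) : s = c := by
  by_contra hsc
  rcases le_or_gt s 0 with hs | hs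
  · have hlog : log 2⁻¹ < 0 := log_neg (by norm_num) (by norm_num)
    have := h 2⁻¹ (by norm_num)
    norm_num at this
    nlinarith
  · -- `t = s / c` minimizes `c * log t + s / t`
    have hx : 0 < s / c := div_pos hs hc
    have hlog := log_lt_sub_one_of_pos hx (by rwa [ne_eq, div_eq_one_iff_eq hc.ne'])
    have := h (s / c) hx
    rw [inv_div, sub_mul, div_mul_cancel₀ _ hs.ne', one_mul] at this
    have := mul_lt_mul_of_pos_left hlog hc
    rw [mul_sub, mul_div_cancel₀ _ hc.ne'] at this
    linarith

lemma IsIdempotentElem.one_add_smul_mul_one_add_smul {R : Type*} [Ring R] [Algebra ℝ R] {Q : R}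
    (hQ : IsIdempotentElem Q) (a b : ℝ) :
    (1 + a • Q) * (1 + b • Q) = 1 + (a + b + a * b) • Q := by
  rw [add_mul, mul_add, mul_add, smul_mul_smul, hQ.eq, one_mul, mul_one, one_mul]
  module

section RankOneStretch

variable {ι : Type*} [Fintype ι] [DecidableEq ι]

omit [DecidableEq ι] in
lemma trace_vecMulVec_mul (v w : ι → ℝ) (S : Matrix ι ι ℝ) :
    (vecMulVec v w * S).trace = w ⬝ᵥ S *ᵥ v := by
  rw [vecMulVec_mul, trace_vecMulVec, dotProduct_comm, dotProduct_mulVec]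

omit [DecidableEq ι] in
lemma vecMulVec_mul_mul_vecMulVec_self {A : Matrix ι ι ℝ} {w : ι → ℝ}
    (hw : w ⬝ᵥ A *ᵥ w = 1) : vecMulVec w w * A * vecMulVec w w = vecMulVec w w := by
  rw [vecMulVec_mul, vecMulVec_mul_vecMulVec, ← dotProduct_mulVec, hw, one_smul]

/-- For `w ⬝ᵥ A *ᵥ w = 1` this is `A^{1/2} (1 + (t - 1) v vᵀ) A^{1/2}` with `v = A^{1/2} w`:
`A` stretched by the factor `t` along `w`. -/
def rankOneStretch (A : Matrix ι ι ℝ) (w : ι → ℝ) (t : ℝ) : Matrix ι ι ℝ :=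
  A + (t - 1) • (A * vecMulVec w w * A)

lemma rankOneStretch_eq_mul (A : Matrix ι ι ℝ) (w : ι → ℝ) (t : ℝ) :
    rankOneStretch A w t = A * (1 + (t - 1) • (vecMulVec w w * A)) := by
  rw [rankOneStretch, Matrix.mul_add, Matrix.mul_one, Matrix.mul_smul, Matrix.mul_assoc]

lemma det_rankOneStretch {A : Matrix ι ι ℝ} {w : ι → ℝ} (hw : w ⬝ᵥ A *ᵥ w = 1) (t : ℝ) :
    (rankOneStretch A w t).det = t * A.det := by
  rw [rankOneStretch_eq_mul, det_mul, vecMulVec_mul, ← vecMulVec_smul, vecMulVec_eq Unit,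
    det_one_add_replicateCol_mul_replicateRow, smul_dotProduct, ← dotProduct_mulVec, hw]
  simp only [smul_eq_mul]
  ring

lemma inv_rankOneStretch {A : Matrix ι ι ℝ} (hA : IsUnit A.det) {w : ι → ℝ}
    (hw : w ⬝ᵥ A *ᵥ w = 1) {t : ℝ} (ht : t ≠ 0) :
    (rankOneStretch A w t)⁻¹ = A⁻¹ + (t⁻¹ - 1) • vecMulVec w w := by
  have hQ : IsIdempotentElem (vecMulVec w w * A) := by
    rw [IsIdempotentElem, ← Matrix.mul_assoc, vecMulVec_mul_mul_vecMulVec_self hw]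
  have hAinv :
      A⁻¹ + (t⁻¹ - 1) • vecMulVec w w = (1 + (t⁻¹ - 1) • (vecMulVec w w * A)) * A⁻¹ := by
    rw [Matrix.add_mul, Matrix.smul_mul, Matrix.mul_assoc, mul_nonsing_inv _ hA, Matrix.one_mul,
      Matrix.mul_one]
  apply inv_eq_right_inv
  rw [hAinv, rankOneStretch_eq_mul, Matrix.mul_assoc, ← Matrix.mul_assoc (1 + _),
    hQ.one_add_smul_mul_one_add_smul]
  have hcoef : t - 1 + (t⁻¹ - 1) + (t - 1) * (t⁻¹ - 1) = 0 := by field_simp; ring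
  rw [hcoef, zero_smul, add_zero, Matrix.one_mul, mul_nonsing_inv _ hA]

lemma posDef_rankOneStretch {A : Matrix ι ι ℝ} (hA : A.PosDef) {w : ι → ℝ}
    (hw : w ⬝ᵥ A *ᵥ w = 1) {t : ℝ} (ht : 0 < t) : (rankOneStretch A w t).PosDef := by
  have hPSD : ∀ v : ι → ℝ, (vecMulVec v v).PosSemidef := fun v => by
    simpa only [star_trivial] using posSemidef_vecMulVec_self_star v
  rcases le_or_gt 1 t with h1 | h1
  · have hAT : w ᵥ* A = A *ᵥ w := by
      rw [← vecMul_transpose, ← conjTranspose_eq_transpose_of_trivial, hA.isHermitian.eq]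
    have hAPA : A * vecMulVec w w * A = vecMulVec (A *ᵥ w) (A *ᵥ w) := by
      rw [mul_vecMulVec, vecMulVec_mul, hAT]
    rw [rankOneStretch, hAPA]
    exact hA.add_posSemidef ((hPSD (A *ᵥ w)).smul (sub_nonneg.mpr h1))
  · rw [← posDef_inv_iff, inv_rankOneStretch hA.det_pos.ne'.isUnit hw ht.ne']
    exact hA.inv.add_posSemidef ((hPSD w).smul (sub_nonneg.mpr ((one_le_inv₀ ht).mpr h1.le)))

omit [DecidableEq ι] in
lemma dotProduct_mulVec_eq_mul_of_normalized {A S : Matrix ι ι ℝ} (hA : A.PosDef) {c : ℝ}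
    (h : ∀ w, w ⬝ᵥ A *ᵥ w = 1 → w ⬝ᵥ S *ᵥ w = c) (w : ι → ℝ) :
    w ⬝ᵥ S *ᵥ w = c * (w ⬝ᵥ A *ᵥ w) := by
  rcases eq_or_ne w 0 with rfl | hw
  · simp
  have hr : 0 < w ⬝ᵥ A *ᵥ w := by simpa only [star_trivial] using hA.dotProduct_mulVec_pos hw
  have hquad : ∀ (B : Matrix ι ι ℝ) (k : ℝ), k • w ⬝ᵥ B *ᵥ (k • w) = k * k * (w ⬝ᵥ B *ᵥ w) :=
    fun B k => by simp only [mulVec_smul, dotProduct_smul, smul_dotProduct, smul_eq_mul]; ring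
  set k := (√(w ⬝ᵥ A *ᵥ w))⁻¹
  have hk : k * k * (w ⬝ᵥ A *ᵥ w) = 1 := by
    rw [← mul_inv, Real.mul_self_sqrt hr.le, inv_mul_cancel₀ hr.ne']
  have hkS := h (k • w) (by rw [hquad, hk])
  rw [hquad] at hkS
  rw [← hkS, mul_comm (k * k), mul_assoc, hk, mul_one]

open scoped MatrixOrder in
lemma eq_smul_of_isMinOn_mul_log_det_add_trace {A S : Matrix ι ι ℝ} (hA : A.PosDef)
    (hS : S.IsHermitian) {c : ℝ} (hc : 0 < c)
    (hmin : IsMinOn (fun X : Matrix ι ι ℝ => c * log X.det + (X⁻¹ * S).trace) {X | X.PosDef} A) :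
    S = c • A := by
  have hunit : ∀ w, w ⬝ᵥ A *ᵥ w = 1 → w ⬝ᵥ S *ᵥ w = c := by
    intro w hw
    refine eq_of_forall_mul_log_add_inv_sub_one_mul_nonneg hc fun t ht => ?_
    have h := hmin (posDef_rankOneStretch hA hw ht)
    simp only [Set.mem_ofPred_eq, det_rankOneStretch hw,
      inv_rankOneStretch hA.det_pos.ne'.isUnit hw ht.ne', Matrix.add_mul, trace_add,
      Matrix.smul_mul, trace_smul, trace_vecMulVec_mul, smul_eq_mul,
      log_mul ht.ne' hA.det_pos.ne'] at h
    linarith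
  have hquad := dotProduct_mulVec_eq_mul_of_normalized hA hunit
  have hcA : (c • A).IsHermitian := hA.isHermitian.smul (IsSelfAdjoint.all c)
  apply le_antisymm <;> refine posSemidef_iff_dotProduct_mulVec.mpr ⟨?_, fun x => ?_⟩
  · exact hcA.sub hS
  · simp [sub_mulVec, smul_mulVec, hquad]
  · exact hS.sub hcA
  · simp [sub_mulVec, smul_mulVec, hquad]

end RankOneStretch

lemma Fintype.sum_apply_update {ι G : Type*} [Fintype ι] [DecidableEq ι] [AddCommGroup G]
    {β : ι → Type*} (g : ∀ i, β i → G) (x : ∀ i, β i) (i : ι) (y : β i) :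
    ∑ j, g j (Function.update x i y j) = ∑ j, g j (x j) + (g i y - g i (x i)) := by
  have hrest :
      ∑ j : {j // j ≠ i}, g j (Function.update x i y j) = ∑ j : {j // j ≠ i}, g j (x j) :=
    Finset.sum_congr rfl fun j _ => by rw [Function.update_of_ne j.2]
  rw [Fintype.sum_eq_add_sum_subtype_ne _ i, Fintype.sum_eq_add_sum_subtype_ne _ i,
    Function.update_self, hrest]
  abel

section ModeUnfolding

variable {M : ℕ} {p : Fin M → ℕ}

lemma embIdx_self (m0 : Fin M) (a : Fin (p m0)) (u : OffIndex M p m0) :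
    embIdx m0 a u m0 = a := by
  rw [embIdx, dif_pos rfl, cast_eq]

lemma embIdx_of_ne (m0 : Fin M) (a : Fin (p m0)) (u : OffIndex M p m0) {j : Fin M}
    (h : j ≠ m0) : embIdx m0 a u j = u ⟨j, h⟩ := by
  simp [embIdx, h]

def embIdxEquiv (m0 : Fin M) : Fin (p m0) × OffIndex M p m0 ≃ MultiIndex M p where
  toFun x := embIdx m0 x.1 x.2
  invFun u := (u m0, fun j => u j.1)
  left_inv x := Prod.ext (embIdx_self m0 x.1 x.2) (funext fun j => embIdx_of_ne m0 x.1 x.2 j.2)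
  right_inv u := funext fun j => by
    by_cases h : j = m0
    · subst h
      exact embIdx_self _ _ _
    · exact embIdx_of_ne _ _ _ h

/-- The mode-`m0` Gram matrix `E_(m0) (⊗_{j ≠ m0} Ξ_j⁻¹) E_(m0)ᵀ`. -/
noncomputable def modeGram (m0 : Fin M) (Xi : (m : Fin M) → Matrix (Fin (p m)) (Fin (p m)) ℝ)
    (E : MultiIndex M p → ℝ) : Matrix (Fin (p m0)) (Fin (p m0)) ℝ :=
  of fun a b => ∑ u : OffIndex M p m0, ∑ v : OffIndex M p m0,
    E (embIdx m0 a u) * (∏ j : {j : Fin M // j ≠ m0}, (Xi j.1)⁻¹ (u j) (v j)) * E (embIdx m0 b v)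

lemma modeGram_transpose (m0 : Fin M) {Xi : (m : Fin M) → Matrix (Fin (p m)) (Fin (p m)) ℝ}
    (hXi : ∀ m, (Xi m).IsHermitian) (E : MultiIndex M p → ℝ) :
    (modeGram m0 Xi E)ᵀ = modeGram m0 Xi E := by
  have hsymm : ∀ m x y, (Xi m)⁻¹ x y = (Xi m)⁻¹ y x := fun m x y => by
    rw [← (hXi m).inv.apply x y, star_trivial]
  ext a b
  simp only [modeGram, transpose_apply, of_apply]
  rw [Finset.sum_comm]
  refine Finset.sum_congr rfl fun u _ => Finset.sum_congr rfl fun v _ => ?_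
  simp only [hsymm _ (v _) (u _)]
  ring

lemma prod_inv_update_embIdx (m0 : Fin M) (Xi : (m : Fin M) → Matrix (Fin (p m)) (Fin (p m)) ℝ)
    (X : Matrix (Fin (p m0)) (Fin (p m0)) ℝ) (a b : Fin (p m0)) (u v : OffIndex M p m0) :
    ∏ m, (Function.update Xi m0 X m)⁻¹ (embIdx m0 a u m) (embIdx m0 b v m) =
      X⁻¹ a b * ∏ j : {j : Fin M // j ≠ m0}, (Xi j.1)⁻¹ (u j) (v j) := by
  rw [Fintype.prod_eq_mul_prod_subtype_ne _ m0, embIdx_self, embIdx_self, Function.update_self]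
  congr 1
  refine Finset.prod_congr rfl fun j _ => ?_
  rw [embIdx_of_ne m0 a u j.2, embIdx_of_ne m0 b v j.2, Function.update_of_ne j.2]

lemma mahalSq_update (m0 : Fin M) (Xi : (m : Fin M) → Matrix (Fin (p m)) (Fin (p m)) ℝ)
    (X : Matrix (Fin (p m0)) (Fin (p m0)) ℝ) (E : MultiIndex M p → ℝ) :
    mahalSq (Function.update Xi m0 X) E = ∑ a, ∑ b, X⁻¹ a b * modeGram m0 Xi E a b := by
  simp only [mahalSq, ← (embIdxEquiv m0).sum_comp, Fintype.sum_prod_type, embIdxEquiv,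
    Equiv.coe_fn_mk, prod_inv_update_embIdx, modeGram, of_apply, Finset.mul_sum]
  refine Finset.sum_congr rfl fun a _ => ?_
  rw [Finset.sum_comm]
  refine Finset.sum_congr rfl fun b _ => Finset.sum_congr rfl fun u _ =>
    Finset.sum_congr rfl fun v _ => ?_
  ring

lemma sum_mul_mahalSq_update {ι : Type*} [Fintype ι] (m0 : Fin M)
    (Xi : (m : Fin M) → Matrix (Fin (p m)) (Fin (p m)) ℝ) (X : Matrix (Fin (p m0)) (Fin (p m0)) ℝ)
    (w : ι → ℝ) (E : ι → MultiIndex M p → ℝ) :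
    ∑ i, w i * mahalSq (Function.update Xi m0 X) (E i) =
      (X⁻¹ * (∑ i, w i • modeGram m0 Xi (E i))ᵀ).trace := by
  simp only [mahalSq_update, trace, diag_apply, mul_apply, transpose_apply, Matrix.sum_apply,
    Matrix.smul_apply, smul_eq_mul, Finset.mul_sum]
  rw [Finset.sum_comm]
  refine Finset.sum_congr rfl fun a _ => ?_
  rw [Finset.sum_comm]
  refine Finset.sum_congr rfl fun b _ => Finset.sum_congr rfl fun i _ => ?_
  ring

end ModeUnfolding

theorem stmt14_general (M : ℕ) (p : Fin M → ℕ) (hp : ∀ m, 1 ≤ p m)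
    (n : ℕ) (hn : 1 ≤ n) (w : Fin n → ℝ)
    (Y : Fin n → MultiIndex M p → ℝ) (μ : MultiIndex M p → ℝ)
    (H : ((m : Fin M) → Matrix (Fin (p m)) (Fin (p m)) ℝ) → ℝ)
    (hH : ∀ Xi, H Xi =
      (∑ m, (n : ℝ) * (∏ j ∈ Finset.univ.erase m, (p j : ℝ)) / 2 * Real.log (Xi m).det) +
        (1 / 2 : ℝ) * ∑ i, w i * mahalSq Xi (fun u => Y i u - μ u))
    (St : (m : Fin M) → Matrix (Fin (p m)) (Fin (p m)) ℝ)
    (hStpos : ∀ m, (St m).PosDef)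
    (hStmin : ∀ Xi : (m : Fin M) → Matrix (Fin (p m)) (Fin (p m)) ℝ,
      (∀ m, (Xi m).PosDef) → H St ≤ H Xi) :
    ∀ (m0 : Fin M) (a b : Fin (p m0)),
      St m0 a b = (1 / ((n : ℝ) * ∏ j ∈ Finset.univ.erase m0, (p j : ℝ))) *
        ∑ i, w i *
          ∑ u : OffIndex M p m0, ∑ v : OffIndex M p m0,
            (Y i (embIdx m0 a u) - μ (embIdx m0 a u)) *
              (∏ j : {j : Fin M // j ≠ m0}, (St j.1)⁻¹ (u j) (v j)) *
              (Y i (embIdx m0 b v) - μ (embIdx m0 b v)) := by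
  intro m0 a b
  set c : ℝ := n * ∏ j ∈ Finset.univ.erase m0, (p j : ℝ)
  set S := ∑ i, w i • modeGram m0 St (fun u => Y i u - μ u)
  have hc : 0 < c :=
    mul_pos (by exact_mod_cast hn) (Finset.prod_pos fun j _ => by exact_mod_cast hp j)
  have hST : Sᵀ = S := by
    simp only [S, transpose_sum, transpose_smul,
      modeGram_transpose m0 fun m => (hStpos m).isHermitian]
  have hS : S.IsHermitian := by rw [IsHermitian, conjTranspose_eq_transpose_of_trivial, hST]
  have hH_update : ∀ X, H (Function.update St m0 X) = H St +
      (c / 2 * log X.det + 1 / 2 * (X⁻¹ * S).trace -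
        (c / 2 * log (St m0).det + 1 / 2 * ((St m0)⁻¹ * S).trace)) := by
    intro X
    have hSt := sum_mul_mahalSq_update m0 St (St m0) w fun i u => Y i u - μ u
    rw [Function.update_eq_self] at hSt
    rw [hH, hH, Fintype.sum_apply_update
      (fun m (Z : Matrix (Fin (p m)) (Fin (p m)) ℝ) =>
        (n : ℝ) * (∏ j ∈ Finset.univ.erase m, (p j : ℝ)) / 2 * log Z.det),
      sum_mul_mahalSq_update, hSt, hST]
    ring
  have hmin : IsMinOn (fun X => c * log X.det + (X⁻¹ * S).trace) {X | X.PosDef} (St m0) := by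
    intro X hX
    have h := hStmin _ ((Function.forall_update_iff St (p := fun _ Z => Z.PosDef)).mpr
      ⟨hX, fun m _ => hStpos m⟩)
    rw [hH_update] at h
    simp only [Set.mem_ofPred_eq]
    linarith
  have hSab : S a b = c * St m0 a b := by
    rw [eq_smul_of_isMinOn_mul_log_det_add_trace (hStpos m0) hS hc hmin, Matrix.smul_apply,
      smul_eq_mul]
  simp only [S, Matrix.sum_apply, Matrix.smul_apply, smul_eq_mul, modeGram, of_apply] at hSab
  rw [hSab]
  field_simp

/-- Lemma 1 of the Supplementary Materials: a minimizer of the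
weighted-least-squares objective `H(Ξ)` over tuples of symmetric positive definite
matrices satisfies the generalized flip-flop stationary equations. -/
theorem stmt14 (M : ℕ) (hM : 1 ≤ M) (p : Fin M → ℕ) (hp : ∀ m, 1 ≤ p m)
    (n : ℕ) (hn : 1 ≤ n) (w : Fin n → ℝ) (hw : ∀ i, 0 < w i)
    (Y : Fin n → MultiIndex M p → ℝ) (μ : MultiIndex M p → ℝ)
    (H : ((m : Fin M) → Matrix (Fin (p m)) (Fin (p m)) ℝ) → ℝ)
    (hH : ∀ Xi, H Xi =
      (∑ m, (n : ℝ) * (∏ j ∈ Finset.univ.erase m, (p j : ℝ)) / 2 * Real.log (Xi m).det) +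
        (1 / 2 : ℝ) * ∑ i, w i * mahalSq Xi (fun u => Y i u - μ u))
    (St : (m : Fin M) → Matrix (Fin (p m)) (Fin (p m)) ℝ)
    (hStpos : ∀ m, (St m).PosDef)
    (hStmin : ∀ Xi : (m : Fin M) → Matrix (Fin (p m)) (Fin (p m)) ℝ,
      (∀ m, (Xi m).PosDef) → H St ≤ H Xi) :
    ∀ (m0 : Fin M) (a b : Fin (p m0)),
      St m0 a b = (1 / ((n : ℝ) * ∏ j ∈ Finset.univ.erase m0, (p j : ℝ))) *
        ∑ i, w i *
          ∑ u : OffIndex M p m0, ∑ v : OffIndex M p m0,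
            (Y i (embIdx m0 a u) - μ (embIdx m0 a u)) *
              (∏ j : {j : Fin M // j ≠ m0}, (St j.1)⁻¹ (u j) (v j)) *
              (Y i (embIdx m0 b v) - μ (embIdx m0 b v)) :=
  stmt14_general M p hp n hn w Y μ H hH St hStpos hStmin
end
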